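/- Let G be a complete multipartite graph on n vertices with at least one edge. Then v(J(G)) = n − 2. -/

import Mathlib

open MvPolynomial CategoryTheory

noncomputable section

/-- A set of vertices is a vertex cover if it meets every edge. -/
def IsVertexCover {V : Type} (G : SimpleGraph V) (C : Set V) : Prop :=
  ∀ ⦃u v : V⦄, G.Adj u v → u ∈ C ∨ v ∈ C

/-- A vertex cover minimal with respect to inclusion. -/
def IsMinimalVertexCover {V : Type} (G : SimpleGraph V) (C : Set V) : Prop :=
  IsVertexCover G C ∧ ∀ C' ⊆ C, IsVertexCover G C' → C' = C

/-- `α₀(G)`: the minimum cardinality of a vertex cover of `G`. -/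
def coverNumber {V : Type} (G : SimpleGraph V) : ℕ :=
  sInf {k | ∃ C : Set V, IsVertexCover G C ∧ C.ncard = k}

/-- `bight(I(G))`: the maximum cardinality of a minimal vertex cover of `G`. -/
def bigHeight {V : Type} (G : SimpleGraph V) : ℕ :=
  sSup {k | ∃ C : Set V, IsMinimalVertexCover G C ∧ C.ncard = k}

/-- The edge ideal `I(G) ⊆ K[x_v : v ∈ V]`, generated by the monomials
`x_u * x_v` over the edges `{u,v}` of `G`. -/
def edgeIdeal (K : Type) [Field K] {V : Type} (G : SimpleGraph V) :
    Ideal (MvPolynomial V K) :=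
  Ideal.span {m | ∃ u v : V, G.Adj u v ∧ m = X u * X v}

/-- The cover ideal `J(G) = ⋂_{{u,v} ∈ E(G)} ⟨x_u, x_v⟩`. -/
def coverIdeal (K : Type) [Field K] {V : Type} (G : SimpleGraph V) :
    Ideal (MvPolynomial V K) :=
  ⨅ (u : V) (v : V) (_ : G.Adj u v), Ideal.span {X u, X v}

/-- The v-number of a graded ideal `I`: the least `d ≥ 0` such that there is a
homogeneous polynomial `f` of degree `d` with `I : f` a prime ideal. -/
def vNumber {K : Type} [Field K] {V : Type} (I : Ideal (MvPolynomial V K)) : ℕ :=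
  sInf {d | ∃ f : MvPolynomial V K, f.IsHomogeneous d ∧
    (I.colon (Ideal.span {f})).IsPrime}

/-- The homogeneous maximal ideal `⟨x_1, …, x_n⟩` of the polynomial ring. -/
def maxIdeal (K : Type) [Field K] (V : Type) : Ideal (MvPolynomial V K) :=
  Ideal.span (Set.range (X : V → MvPolynomial V K))

/-- The depth of the module `M` with respect to the ideal `J`: the supremum of
the lengths of regular sequences on `M` consisting of elements of `J`. -/
def mdepth {R : Type} [CommRing R] (J : Ideal R) (M : Type) [AddCommGroup M]
    [Module R M] : ℕ :=
  sSup {k | ∃ rs : List R, rs.length = k ∧ (∀ r ∈ rs, r ∈ J) ∧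
    RingTheory.Sequence.IsRegular M rs}

/-- The projective dimension of an `R`-module `M`, characterized by the
vanishing of `Ext^i(M, N)` for all `i > d` and all modules `N`. -/
def projDim (R : Type) [CommRing R] (M : ModuleCat.{0} R) : ℕ :=
  sInf {d : ℕ | ∀ (N : ModuleCat.{0} R) (i : ℕ), d < i →
    Subsingleton (((Ext R (ModuleCat.{0} R) i).obj (Opposite.op M)).obj N)}

/-- A graph is complete multipartite if its vertex set admits a partition into
nonempty parts, each part inducing an empty graph, with any two vertices in
distinct parts adjacent. -/
def IsCompleteMultipartite {V : Type} (G : SimpleGraph V) : Prop :=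
  ∃ (k : ℕ) (P : Fin k → Set V),
    (∀ i, (P i).Nonempty) ∧
    (∀ v : V, ∃! i, v ∈ P i) ∧
    (∀ i, ∀ u ∈ P i, ∀ v ∈ P i, ¬ G.Adj u v) ∧
    (∀ i j, i ≠ j → ∀ u ∈ P i, ∀ v ∈ P j, G.Adj u v)

/-!
Write `P a b = ⟨x_a, x_b⟩`, a prime ideal. Since `J(G)` is the intersection of the `P a b` over
the edges, `J(G) : f` is the intersection of those `P a b` that do not contain `f`; if it is
prime, it equals one of them, `P a b`, which is then contained in every other `P c d` avoiding
`f`, i.e. `{a, b}` is the only edge whose prime avoids `f`. Take a monomial `m` of `f` free of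
`x_a, x_b`. Every other vertex `w` is adjacent to `a` or `b` (say `c`), and `m` shows that
`P c w` avoids `f` unless `x_w ∣ m`; hence `m`, and so `f`, has degree at least `n - 2`.
Conversely, for `f = ∏_{w ≠ u, v} x_w` with `uv` an edge, `J(G) : f = P u v`.
-/

namespace MvPolynomial

variable {σ R : Type*} [CommRing R]

theorem ker_aeval_ite_mem_eq_span_X_image (S : Set σ) [DecidablePred (· ∈ S)] :
    RingHom.ker (aeval fun i ↦ if i ∈ S then 0 else X i :
        MvPolynomial σ R →ₐ[R] MvPolynomial σ R) =
      Ideal.span (X '' S) := by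
  set φ : MvPolynomial σ R →ₐ[R] MvPolynomial σ R := aeval fun i ↦ if i ∈ S then 0 else X i
  set π := Ideal.Quotient.mkₐ R (Ideal.span (X '' S : Set (MvPolynomial σ R)))
  have hπφ : π.comp φ = π := by
    refine algHom_ext fun i ↦ ?_
    by_cases hi : i ∈ S
    · simp only [φ, π, AlgHom.comp_apply, aeval_X, if_pos hi, map_zero]
      exact (Ideal.Quotient.eq_zero_iff_mem.2 (Ideal.subset_span (Set.mem_image_of_mem X hi))).symm
    · simp [φ, hi]
  refine le_antisymm (fun f hf ↦ ?_) (Ideal.span_le.2 ?_)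
  · rw [← Ideal.Quotient.eq_zero_iff_mem]
    change π f = 0
    rw [← hπφ, AlgHom.comp_apply, (RingHom.mem_ker).1 hf, map_zero]
  · rintro _ ⟨i, hi, rfl⟩
    simp [φ, hi]

theorem isPrime_span_X_image [IsDomain R] (S : Set σ) :
    (Ideal.span (X '' S : Set (MvPolynomial σ R))).IsPrime := by
  classical
  rw [← ker_aeval_ite_mem_eq_span_X_image]
  exact RingHom.ker_isPrime _

theorem X_mem_span_X_image_iff [Nontrivial R] {S : Set σ} {i : σ} :
    (X i : MvPolynomial σ R) ∈ Ideal.span (X '' S) ↔ i ∈ S := by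
  classical
  simp [mem_ideal_span_X_image, support_X, Finsupp.single_apply]

theorem span_X_image_le_span_X_image_iff [Nontrivial R] {S T : Set σ} :
    Ideal.span (X '' S : Set (MvPolynomial σ R)) ≤ Ideal.span (X '' T) ↔ S ⊆ T := by
  simp [Ideal.span_le, Set.subset_def, X_mem_span_X_image_iff]

theorem prod_X_mem_span_X_image_iff [IsDomain R] {S : Set σ} {s : Finset σ} :
    ∏ i ∈ s, (X i : MvPolynomial σ R) ∈ Ideal.span (X '' S) ↔ ∃ i ∈ s, i ∈ S := by
  have := isPrime_span_X_image (R := R) S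
  simp [Ideal.IsPrime.prod_mem_iff, X_mem_span_X_image_iff]

theorem isHomogeneous_prod_X (s : Finset σ) :
    (∏ i ∈ s, X i : MvPolynomial σ R).IsHomogeneous s.card := by
  simpa using IsHomogeneous.prod s _ (fun _ ↦ 1) fun i _ ↦ isHomogeneous_X R i

end MvPolynomial

theorem Finsupp.card_support_le_degree {σ : Type*} (m : σ →₀ ℕ) : m.support.card ≤ m.degree := by
  rw [Finset.card_eq_sum_ones, Finsupp.degree_apply]
  exact Finset.sum_le_sum fun i hi ↦ Nat.one_le_iff_ne_zero.2 (Finsupp.mem_support_iff.1 hi)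

theorem IsCompleteMultipartite.isCompleteMultipartite {V : Type} {G : SimpleGraph V}
    (hG : IsCompleteMultipartite G) : G.IsCompleteMultipartite := by
  obtain ⟨k, P, -, hcover, hindep, hadj⟩ := hG
  choose part hpart using fun v ↦ (hcover v).exists
  have part_eq : ∀ {a b}, ¬ G.Adj a b → part a = part b := fun h ↦
    by_contra fun hne ↦ h (hadj _ _ hne _ (hpart _) _ (hpart _))
  exact ⟨fun a b c hab hbc ↦
    hindep (part a) a (hpart a) c ((part_eq hab).trans (part_eq hbc) ▸ hpart c)⟩

theorem SimpleGraph.IsCompleteMultipartite.adj_or_adj_of_adj {V : Type} {G : SimpleGraph V}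
    (hG : G.IsCompleteMultipartite) {a b : V} (hab : G.Adj a b) (w : V) :
    G.Adj a w ∨ G.Adj b w := by
  by_contra! h
  exact hG.trans a w b h.1 (fun hwb ↦ h.2 hwb.symm) hab

section CoverIdeal

variable {K : Type} [Field K] {V : Type} {G : SimpleGraph V}

theorem mem_coverIdeal_iff {f : MvPolynomial V K} :
    f ∈ coverIdeal K G ↔ ∀ a b, G.Adj a b → f ∈ Ideal.span (X '' {a, b}) := by
  simp [coverIdeal, Set.image_pair]

theorem prod_X_mem_coverIdeal_iff {s : Finset V} :
    ∏ i ∈ s, (X i : MvPolynomial V K) ∈ coverIdeal K G ↔ IsVertexCover G s := by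
  simp [mem_coverIdeal_iff, prod_X_mem_span_X_image_iff, IsVertexCover, and_or_left, exists_or]

theorem coverIdeal_colon_eq_iInf (f : MvPolynomial V K) :
    (coverIdeal K G).colon (Ideal.span {f}) =
      ⨅ p : {p : V × V // G.Adj p.1 p.2 ∧ f ∉ Ideal.span (X '' {p.1, p.2})},
        Ideal.span (X '' {p.1.1, p.1.2}) := by
  ext r
  simp only [Ideal.mem_colon_span_singleton, mem_coverIdeal_iff, Submodule.mem_iInf,
    Subtype.forall, and_imp, Prod.forall]
  refine forall₃_congr fun a b hab ↦ ?_
  have := isPrime_span_X_image (R := K) {a, b}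
  by_cases hf : f ∈ Ideal.span (X '' {a, b})
  · simp [hf, Ideal.mul_mem_left]
  · simp [hf, Ideal.IsPrime.mul_mem_iff_mem_or_mem]

theorem exists_adj_of_isPrime_coverIdeal_colon [Finite V] {f : MvPolynomial V K}
    (hf : ((coverIdeal K G).colon (Ideal.span {f})).IsPrime) :
    ∃ a b, G.Adj a b ∧ f ∉ Ideal.span (X '' {a, b}) ∧
      ∀ c d, G.Adj c d → f ∉ Ideal.span (X '' {c, d}) → ({a, b} : Set V) ⊆ {c, d} := by
  have := Fintype.ofFinite {p : V × V // G.Adj p.1 p.2 ∧ f ∉ Ideal.span (X '' {p.1, p.2})}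
  rw [coverIdeal_colon_eq_iInf, ← Finset.inf_univ_eq_iInf] at hf
  obtain ⟨⟨⟨a, b⟩, hab, hfab⟩, -, heq⟩ := Ideal.eq_inf_of_isPrime_inf hf
  refine ⟨a, b, hab, hfab, fun c d hcd hfcd ↦ ?_⟩
  have hle : Ideal.span (X '' {a, b}) ≤ Ideal.span (X '' {c, d}) :=
    heq ▸ Finset.inf_le (Finset.mem_univ
      (⟨(c, d), hcd, hfcd⟩ : {p : V × V // G.Adj p.1 p.2 ∧ f ∉ Ideal.span (X '' {p.1, p.2})}))
  exact span_X_image_le_span_X_image_iff.1 hle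

theorem card_sub_two_le_of_isPrime_coverIdeal_colon [Fintype V] (hG : G.IsCompleteMultipartite)
    {f : MvPolynomial V K} {d : ℕ} (hfd : f.IsHomogeneous d)
    (hf : ((coverIdeal K G).colon (Ideal.span {f})).IsPrime) : Fintype.card V - 2 ≤ d := by
  classical
  obtain ⟨a, b, hab, hfab, hmin⟩ := exists_adj_of_isPrime_coverIdeal_colon hf
  obtain ⟨m, hm, hma, hmb⟩ : ∃ m ∈ f.support, m a = 0 ∧ m b = 0 := by
    simpa [mem_ideal_span_X_image] using hfab
  have hsupp : ({a, b} : Finset V)ᶜ ⊆ m.support := by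
    intro w hw
    rw [Finsupp.mem_support_iff]
    intro hmw
    obtain ⟨c, hc, hcw⟩ : ∃ c ∈ ({a, b} : Set V), G.Adj c w := by
      rcases hG.adj_or_adj_of_adj hab w with h | h
      exacts [⟨a, by simp, h⟩, ⟨b, by simp, h⟩]
    have hfcw : f ∉ Ideal.span (X '' {c, w}) := by
      rw [mem_ideal_span_X_image]
      push Not
      exact ⟨m, hm, by rcases hc with rfl | rfl <;> simp [*]⟩
    -- `{a, b} ⊆ {c, w}` with `c ∈ {a, b}` and `a ≠ b` forces `w ∈ {a, b}`.
    have := hmin c w hcw hfcw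
    simp [Set.insert_subset_iff] at this hw hc
    have := hab.ne
    grind
  calc Fintype.card V - 2 = (({a, b} : Finset V)ᶜ).card := by
        rw [Finset.card_compl, Finset.card_pair hab.ne]
    _ ≤ m.support.card := Finset.card_le_card hsupp
    _ ≤ m.degree := Finsupp.card_support_le_degree m
    _ = d := by rw [Finsupp.degree_eq_weight_one]; exact hfd (mem_support_iff.mp hm)

theorem X_mem_coverIdeal_colon_prod_X_compl [Fintype V] [DecidableEq V] (c d : V) :
    X c ∈ (coverIdeal K G).colon (Ideal.span {∏ w ∈ {c, d}ᶜ, (X w : MvPolynomial V K)}) := by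
  have hcover : IsVertexCover G ↑(insert c ({c, d} : Finset V)ᶜ) := fun a b hab ↦ by
    have := hab.ne
    simp only [Finset.coe_insert, Finset.coe_compl, Set.mem_insert_iff, Set.mem_compl_iff,
      Finset.mem_coe, Finset.mem_singleton]
    grind
  rw [Ideal.mem_colon_span_singleton, ← Finset.prod_insert (by simp)]
  exact prod_X_mem_coverIdeal_iff.2 hcover

theorem coverIdeal_colon_prod_X_compl [Fintype V] [DecidableEq V] {u v : V} (huv : G.Adj u v) :
    (coverIdeal K G).colon (Ideal.span {∏ w ∈ {u, v}ᶜ, (X w : MvPolynomial V K)}) =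
      Ideal.span (X '' {u, v}) := by
  have := isPrime_span_X_image (R := K) {u, v}
  refine le_antisymm (fun r hr ↦ ?_) (Ideal.span_le.2 ?_)
  · rw [Ideal.mem_colon_span_singleton, mem_coverIdeal_iff] at hr
    refine ((Ideal.IsPrime.mul_mem_iff_mem_or_mem this).1 (hr u v huv)).resolve_right ?_
    simp [prod_X_mem_span_X_image_iff]
  · rintro _ ⟨c, rfl | rfl, rfl⟩
    · exact X_mem_coverIdeal_colon_prod_X_compl c v
    · rw [Finset.pair_comm]
      exact X_mem_coverIdeal_colon_prod_X_compl c u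

end CoverIdeal

/-- For a complete multipartite graph `G` on `n` vertices with at least one
edge, `v(J(G)) = n - 2`. -/
theorem vNumber_coverIdeal_of_isCompleteMultipartite
    {K : Type} [Field K] {n : ℕ} (G : SimpleGraph (Fin n))
    (hG : IsCompleteMultipartite G) (hE : G.edgeSet.Nonempty) :
    vNumber (coverIdeal K G) = n - 2 := by
  obtain ⟨⟨u, v⟩, huv⟩ := hE
  have hwitness : n - 2 ∈ {d | ∃ f : MvPolynomial (Fin n) K, f.IsHomogeneous d ∧
      ((coverIdeal K G).colon (Ideal.span {f})).IsPrime} := by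
    refine ⟨∏ w ∈ {u, v}ᶜ, X w, ?_, ?_⟩
    · have := isHomogeneous_prod_X (R := K) ({u, v}ᶜ : Finset (Fin n))
      rwa [Finset.card_compl, Finset.card_pair huv.ne, Fintype.card_fin] at this
    · rw [coverIdeal_colon_prod_X_compl huv]
      exact isPrime_span_X_image _
  refine le_antisymm (Nat.sInf_le hwitness) (le_csInf ⟨_, hwitness⟩ ?_)
  rintro d ⟨f, hfd, hf⟩
  simpa using card_sub_two_le_of_isPrime_coverIdeal_colon hG.isCompleteMultipartite hfd hf

end
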